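/- Let q be a complex number with 0 < |q| < 1, and let x be a nonzero complex number that is not an integral power of q. Then G(x,q) = (1 − x)·(x·g(x;q) + 1). -/

import Mathlib

open Complex Real

/-- Finite q-Pochhammer symbol `(a;q)_n`. -/
noncomputable def qPoch (a q : ℂ) (n : ℕ) : ℂ := ∏ k ∈ Finset.range n, (1 - a * q ^ k)

/-- Infinite q-Pochhammer symbol `(a;q)_∞`. -/
noncomputable def qPochInf (a q : ℂ) : ℂ := ∏' k : ℕ, (1 - a * q ^ k)

/-- The theta function `j(x;q) = (x;q)_∞ (q/x;q)_∞ (q;q)_∞`. -/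
noncomputable def jTheta (x q : ℂ) : ℂ := qPochInf x q * qPochInf (q / x) q * qPochInf q q

/-- `f_a(q) = ∑_{n≥0} q^{n²} / ∏_{k=1}^n (1 + a q^k + q^{2k})` for real `a`. -/
noncomputable def fRam (a : ℝ) (q : ℂ) : ℂ :=
  ∑' n : ℕ, q ^ (n ^ 2) / ∏ k ∈ Finset.range n, (1 + (a : ℂ) * q ^ (k + 1) + q ^ (2 * (k + 1)))

/-- The universal mock theta function `g(x;q)`. -/
noncomputable def gu (x q : ℂ) : ℂ :=
  x⁻¹ * (-1 + ∑' n : ℕ, q ^ (n ^ 2) / (qPoch x q (n + 1) * qPoch (q * x⁻¹) q n))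

/-- The rank generating function `G(x,q)`. -/
noncomputable def rankG (x q : ℂ) : ℂ :=
  ∑' n : ℕ, q ^ (n ^ 2) / (qPoch (q * x) q n * qPoch (q * x⁻¹) q n)

/-- Ramanujan's theta function `ψ(q)`. -/
noncomputable def psiTheta (q : ℂ) : ℂ := ∑' n : ℕ, q ^ (n * (n + 1) / 2)

/-- Ramanujan's theta function `φ(q)`. -/
noncomputable def phiTheta (q : ℂ) : ℂ := ∑' n : ℤ, q ^ (n ^ 2)

/-- The third order mock theta function `φ̃(q)`. -/
noncomputable def phiTilde (q : ℂ) : ℂ := ∑' n : ℕ, q ^ (n ^ 2) / qPoch (-q ^ 2) (q ^ 2) n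

/-- The Appell–Lerch sum `m(x,q,z)`. -/
noncomputable def mAL (x q z : ℂ) : ℂ :=
  (jTheta z q)⁻¹ *
    ∑' r : ℤ, (-1 : ℂ) ^ r * q ^ (r * (r - 1) / 2) * z ^ r / (1 - q ^ (r - 1) * x * z)

/-- `x` is an integral power of `q`. -/
def IsIntPow (x q : ℂ) : Prop := ∃ n : ℤ, x = q ^ n

theorem qPoch_succ_eq_one_sub_mul (a q : ℂ) (n : ℕ) :
    qPoch a q (n + 1) = (1 - a) * qPoch (q * a) q n := by
  simp only [qPoch, Finset.prod_range_succ', pow_zero, mul_one]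
  rw [mul_comm]
  congr 1
  exact Finset.prod_congr rfl fun k _ => by ring

theorem IsIntPow.one (q : ℂ) : IsIntPow 1 q := ⟨0, by simp⟩

theorem mul_gu_add_one {x : ℂ} (hx : x ≠ 0) (q : ℂ) :
    x * gu x q + 1 = ∑' n : ℕ, q ^ (n ^ 2) / (qPoch x q (n + 1) * qPoch (q * x⁻¹) q n) := by
  rw [gu, mul_inv_cancel_left₀ hx, neg_add_cancel_comm]

theorem G_eq_g_general (q : ℂ)
    (x : ℂ) (hx0 : x ≠ 0) (hx1 : ¬ IsIntPow x q) :
    rankG x q = (1 - x) * (x * gu x q + 1) := by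
  have hx : (1 : ℂ) - x ≠ 0 := sub_ne_zero.mpr fun h => hx1 (h ▸ IsIntPow.one q)
  rw [mul_gu_add_one hx0, ← tsum_mul_left, rankG]
  congr 1 with n
  rw [qPoch_succ_eq_one_sub_mul, mul_div_assoc', mul_assoc, mul_div_mul_left _ _ hx]

/-- The relation between the rank generating function and the universal mock theta function. -/
theorem G_eq_g (q : ℂ) (hq0 : q ≠ 0) (hq : ‖q‖ < 1)
    (x : ℂ) (hx0 : x ≠ 0) (hx1 : ¬ IsIntPow x q) :
    rankG x q = (1 - x) * (x * gu x q + 1) :=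
  G_eq_g_general q x hx0 hx1
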